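/- For orthonormal Hermite polynomials, 2x·h_ν(x)·h_{ν+1}(x) = √(2(ν+1))·(h_ν(x)² + h_{ν+1}(x)²) − d_ν(x) holds for all real x. -/
import Mathlib


open Polynomial

/-- The orthonormal Hermite polynomial of degree `n` with respect to the weight
`exp (-x^2)` on `ℝ`: `h n = (2^n * n! * √π)^(-1/2) * H_n`, where `H_n` is the
physicists' Hermite polynomial, obtained from the probabilists' Hermite polynomial
`He_n` (Mathlib's `Polynomial.hermite`) by `H_n x = (√2)^n * He_n (√2 * x)`. -/
noncomputable def orthonormalHermite (n : ℕ) : Polynomial ℝ :=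
  Polynomial.C ((Real.sqrt ((2 : ℝ) ^ n * (n.factorial : ℝ) * Real.sqrt Real.pi))⁻¹
      * (Real.sqrt 2) ^ n) *
    ((Polynomial.hermite n).map (Int.castRingHom ℝ)).comp
      (Polynomial.C (Real.sqrt 2) * Polynomial.X)

/-- The Wronskian `d_ν = h_ν h_{ν+1}' − h_ν' h_{ν+1}` of consecutive orthonormal
Hermite polynomials. -/
noncomputable def hermiteWronskian (ν : ℕ) : Polynomial ℝ :=
  orthonormalHermite ν * (orthonormalHermite (ν + 1)).derivative -
    (orthonormalHermite ν).derivative * orthonormalHermite (ν + 1)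


noncomputable def hermiteConst (n : ℕ) : ℝ :=
  (Real.sqrt ((2 : ℝ) ^ n * (n.factorial : ℝ) * Real.sqrt Real.pi))⁻¹ * (Real.sqrt 2) ^ n

lemma hermiteConst_succ (n : ℕ) :
    hermiteConst n * Real.sqrt 2 = Real.sqrt (2 * (n + 1)) * hermiteConst (n + 1) := by
  unfold hermiteConst
  have hA : (0:ℝ) < Real.sqrt ((2 : ℝ) ^ n * (n.factorial : ℝ) * Real.sqrt Real.pi) := by
    apply Real.sqrt_pos.2
    have := Real.sqrt_pos.2 Real.pi_pos
    positivity
  have hB : (0:ℝ) < Real.sqrt (2 * (n + 1)) := by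
    apply Real.sqrt_pos.2; positivity
  have hsplit : Real.sqrt ((2 : ℝ) ^ (n+1) * ((n+1).factorial : ℝ) * Real.sqrt Real.pi)
      = Real.sqrt (2 * (n + 1)) * Real.sqrt ((2 : ℝ) ^ n * (n.factorial : ℝ) * Real.sqrt Real.pi) := by
    rw [← Real.sqrt_mul (by positivity)]
    congr 1
    rw [Nat.factorial_succ]
    push_cast
    ring
  rw [hsplit, mul_inv]
  field_simp
  ring

lemma hermiteConst_deriv (n : ℕ) :
    hermiteConst (n + 1) * Real.sqrt 2 * ((n : ℝ) + 1)
      = Real.sqrt (2 * (n + 1)) * hermiteConst n := by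
  have h := hermiteConst_succ n
  have hBB : Real.sqrt (2 * ((n:ℝ) + 1)) * Real.sqrt (2 * ((n:ℝ) + 1)) = 2 * ((n:ℝ) + 1) :=
    Real.mul_self_sqrt (by positivity)
  have hs2 : Real.sqrt 2 * Real.sqrt 2 = 2 := Real.mul_self_sqrt (by norm_num)
  have h2 : Real.sqrt 2 ≠ 0 := by positivity
  apply mul_right_cancel₀ h2
  calc hermiteConst (n + 1) * Real.sqrt 2 * ((n : ℝ) + 1) * Real.sqrt 2
      = hermiteConst (n + 1) * (Real.sqrt 2 * Real.sqrt 2) * ((n : ℝ) + 1) := by ring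
    _ = 2 * ((n:ℝ) + 1) * hermiteConst (n + 1) := by rw [hs2]; ring
    _ = Real.sqrt (2 * ((n:ℝ) + 1)) * (Real.sqrt (2 * ((n:ℝ) + 1)) * hermiteConst (n + 1)) := by
        rw [← mul_assoc, hBB]
    _ = Real.sqrt (2 * (n + 1)) * hermiteConst n * Real.sqrt 2 := by
        rw [← h]; ring

lemma derivative_hermite_succ (n : ℕ) :
    derivative (hermite (n + 1)) = ((n : Polynomial ℤ) + 1) * hermite n := by
  induction n with
  | zero => simp [hermite_one, hermite_zero]
  | succ n ih =>
    rw [hermite_succ (n+1), derivative_sub, derivative_mul, derivative_X, one_mul, ih,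
      derivative_mul, hermite_succ n]
    simp only [derivative_add, derivative_natCast, derivative_one, add_zero, zero_add, zero_mul]
    push_cast
    ring

lemma onh_eval (n : ℕ) (x : ℝ) :
    (orthonormalHermite n).eval x =
      hermiteConst n * ((hermite n).map (Int.castRingHom ℝ)).eval (Real.sqrt 2 * x) := by
  simp [orthonormalHermite, hermiteConst, eval_comp]

lemma onh_deriv_eval (n : ℕ) (x : ℝ) :
    ((orthonormalHermite n).derivative).eval x =
      hermiteConst n * Real.sqrt 2 *
        ((derivative (hermite n)).map (Int.castRingHom ℝ)).eval (Real.sqrt 2 * x) := by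
  unfold orthonormalHermite
  rw [derivative_mul, derivative_C, zero_mul, zero_add, derivative_comp, derivative_map]
  simp [eval_comp, hermiteConst]
  ring

lemma onh_deriv_succ_eval (n : ℕ) (x : ℝ) :
    ((orthonormalHermite (n + 1)).derivative).eval x =
      Real.sqrt (2 * (n + 1)) * (orthonormalHermite n).eval x := by
  rw [onh_deriv_eval, derivative_hermite_succ, onh_eval]
  simp only [Polynomial.map_mul, Polynomial.map_add, Polynomial.map_natCast, Polynomial.map_one,
    eval_mul, eval_add, eval_natCast, eval_one]
  linear_combination (((hermite n).map (Int.castRingHom ℝ)).eval (Real.sqrt 2 * x)) *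
    hermiteConst_deriv n

lemma onh_recurrence (n : ℕ) (x : ℝ) :
    2 * x * (orthonormalHermite n).eval x =
      Real.sqrt (2 * (n + 1)) * (orthonormalHermite (n + 1)).eval x +
        ((orthonormalHermite n).derivative).eval x := by
  rw [onh_eval, onh_eval, onh_deriv_eval, hermite_succ,
    Polynomial.map_sub, Polynomial.map_mul, map_X, eval_sub, eval_mul, eval_X]
  have hs2 : Real.sqrt 2 * Real.sqrt 2 = 2 := Real.mul_self_sqrt (by norm_num)
  set E := ((hermite n).map (Int.castRingHom ℝ)).eval (Real.sqrt 2 * x) with hE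
  set D := ((derivative (hermite n)).map (Int.castRingHom ℝ)).eval (Real.sqrt 2 * x) with hD
  linear_combination (Real.sqrt 2 * x * E - D) * hermiteConst_succ n +
    (- x * hermiteConst n * E) * hs2

/-- For orthonormal Hermite polynomials,
`2x·h_ν(x)·h_{ν+1}(x) = √(2(ν+1))·(h_ν(x)² + h_{ν+1}(x)²) − d_ν(x)` for all real `x`. -/
theorem two_mul_hermite_mul_hermite_succ (ν : ℕ) (x : ℝ) :
    2 * x * (orthonormalHermite ν).eval x * (orthonormalHermite (ν + 1)).eval x =
      Real.sqrt (2 * (ν + 1)) *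
          (((orthonormalHermite ν).eval x) ^ 2 + ((orthonormalHermite (ν + 1)).eval x) ^ 2) -
        (hermiteWronskian ν).eval x := by
  have h1 := onh_deriv_succ_eval ν x
  have h2 := onh_recurrence ν x
  simp only [hermiteWronskian, eval_sub, eval_mul]
  rw [h1]
  linear_combination ((orthonormalHermite (ν + 1)).eval x) * h2
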